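/- Let P_0 = Bern(p) and P_1 = Bern(p+β) with 0 < β ≤ (1/2)min{p,1−p}, and suppose a test φ based on m i.i.d. samples has type-I error P_0^{⊗m}(φ=1) ≤ δ and type-II error P_1^{⊗m}(φ=0) ≤ δ, with δ ∈ (0, 1/8). Then m ≥ (p(1−p)/(4β²))·log(1/(4δ)). -/

import Mathlib

/-!
For distributions `μ`, `ν` on a finite set, the Bhattacharyya coefficient
`ρ(μ, ν) = ∑ₐ √(μ a ν a)` is multiplicative on product measures, so the `m`-sample
coefficient is `ρᵐ`. By Cauchy–Schwarz, `(∑ √(w₀ w₁))² ≤ ∑ min (w₀, w₁) · ∑ max (w₀, w₁)`, and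
`∑ min (w₀, w₁)` is at most the sum of the two errors of any test, so `ρ^(2m) ≤ 4δ`.
For the two Bernoulli laws, the bound `√(ab) ≥ 2ab/(a+b)` (geometric over harmonic mean) gives
`1 - ρ ≤ β² / (p (1 - p)) ≤ 1/4`, hence `log ρ⁻¹ ≤ 2β² / (p (1 - p))`, and taking logarithms
yields the bound on `m`.
-/

open MeasureTheory Finset

lemma sq_sum_sqrt_mul_le_sum_min_mul_sum_add {β : Type*} (s : Finset β) {f g : β → ℝ}
    (hf : ∀ x ∈ s, 0 ≤ f x) (hg : ∀ x ∈ s, 0 ≤ g x) :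
    (∑ x ∈ s, √(f x * g x)) ^ 2 ≤ (∑ x ∈ s, min (f x) (g x)) * ∑ x ∈ s, (f x + g x) := by
  calc (∑ x ∈ s, √(f x * g x)) ^ 2
      ≤ (∑ x ∈ s, min (f x) (g x)) * ∑ x ∈ s, max (f x) (g x) :=
        sum_sq_le_sum_mul_sum_of_sq_le_mul _ (fun x hx => le_min (hf x hx) (hg x hx))
          (fun x hx => le_max_of_le_left (hf x hx))
          (fun x hx => by rw [Real.sq_sqrt (mul_nonneg (hf x hx) (hg x hx)), min_mul_max])
    _ ≤ (∑ x ∈ s, min (f x) (g x)) * ∑ x ∈ s, (f x + g x) := by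
        gcongr with x hx
        · exact sum_nonneg fun x hx => le_min (hf x hx) (hg x hx)
        · exact max_le_add_of_nonneg (hf x hx) (hg x hx)

lemma sum_min_le_sum_filter_add_sum_filter_not {β : Type*} (s : Finset β) (f g : β → ℝ)
    (P : β → Prop) [DecidablePred P] :
    ∑ x ∈ s, min (f x) (g x) ≤ ∑ x ∈ s with P x, f x + ∑ x ∈ s with ¬P x, g x := by
  rw [← sum_filter_add_sum_filter_not s P]
  gcongr <;> simp

lemma Real.add_div_two_sub_le_sqrt_mul {a b : ℝ} (ha : 0 ≤ a) (hb : 0 ≤ b) :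
    (a + b) / 2 - (a - b) ^ 2 / (2 * (a + b)) ≤ √(a * b) := by
  rcases (add_nonneg ha hb).eq_or_lt with hab | hab
  · obtain ⟨rfl, rfl⟩ : a = 0 ∧ b = 0 := ⟨by linarith, by linarith⟩
    simp
  have hhm : (a + b) / 2 - (a - b) ^ 2 / (2 * (a + b)) = 2 * a * b / (a + b) := by
    field_simp; ring
  rw [hhm, div_le_iff₀ hab]
  have hsq := Real.sq_sqrt (mul_nonneg ha hb)
  nlinarith [Real.sqrt_nonneg (a * b), sq_nonneg (√(a * b) - (a + b) / 2), sq_nonneg (a - b)]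

lemma Real.log_inv_le_two_mul {ρ ε : ℝ} (hε₀ : 0 ≤ ε) (hε : ε ≤ 1 / 2) (hρ : 1 - ε ≤ ρ) :
    Real.log ρ⁻¹ ≤ 2 * ε := by
  have hρ₀ : 0 < ρ := by linarith
  have hinv : ρ⁻¹ ≤ 1 + 2 * ε := by
    rw [inv_le_iff_one_le_mul₀ hρ₀]; nlinarith
  linarith [Real.log_le_sub_one_of_pos (inv_pos.mpr hρ₀)]

namespace PMF
variable {α : Type*} [Fintype α]

lemma sum_toReal (μ : PMF α) : ∑ a, (μ a).toReal = 1 := by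
  have h := μ.tsum_coe
  rw [tsum_fintype] at h
  rw [← ENNReal.toReal_sum fun a _ => μ.apply_ne_top a, h, ENNReal.toReal_one]

lemma sum_prod_toReal_eq_one (μ : PMF α) (n : ℕ) :
    ∑ x : Fin n → α, ∏ i, (μ (x i)).toReal = 1 := by
  simpa [sum_toReal] using (Fintype.sum_pow (fun a => (μ a).toReal) n).symm

noncomputable def bhattacharyyaCoeff (μ ν : PMF α) : ℝ :=
  ∑ a, √((μ a).toReal * (ν a).toReal)

variable [MeasurableSpace α] [MeasurableSingletonClass α]

lemma measure_pi_toMeasure_toReal {n : ℕ} (μ : PMF α) (S : Set (Fin n → α))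
    [DecidablePred (· ∈ S)] :
    ((Measure.pi fun _ : Fin n => μ.toMeasure) S).toReal
      = ∑ x with x ∈ S, ∏ i, (μ (x i)).toReal := by
  have hS : S = ↑(univ.filter (· ∈ S)) := by ext; simp
  conv_lhs => rw [hS, ← sum_measure_singleton]
  rw [ENNReal.toReal_sum fun x _ => measure_ne_top _ _]
  refine sum_congr (by simp) fun x _ => ?_
  rw [Measure.pi_singleton, ENNReal.toReal_prod]
  simp only [toMeasure_apply_singleton _ _ (measurableSet_singleton _)]

theorem bhattacharyyaCoeff_pow_sq_le_two_mul_errors {n : ℕ} (μ ν : PMF α)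
    (φ : (Fin n → α) → Bool) :
    (bhattacharyyaCoeff μ ν ^ n) ^ 2 ≤
      2 * (((Measure.pi fun _ : Fin n => μ.toMeasure) {x | φ x = true}).toReal +
        ((Measure.pi fun _ : Fin n => ν.toMeasure) {x | φ x = false}).toReal) := by
  set w₀ : (Fin n → α) → ℝ := fun x => ∏ i, (μ (x i)).toReal
  set w₁ : (Fin n → α) → ℝ := fun x => ∏ i, (ν (x i)).toReal
  have hw₀ : ∀ x ∈ univ, 0 ≤ w₀ x := fun x _ => prod_nonneg fun _ _ => ENNReal.toReal_nonneg
  have hw₁ : ∀ x ∈ univ, 0 ≤ w₁ x := fun x _ => prod_nonneg fun _ _ => ENNReal.toReal_nonneg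
  have hsqrt : ∑ x, √(w₀ x * w₁ x) = bhattacharyyaCoeff μ ν ^ n := by
    rw [bhattacharyyaCoeff, Fintype.sum_pow]
    refine sum_congr rfl fun x _ => ?_
    rw [← prod_mul_distrib, Real.sqrt_prod _ fun _ _ => by positivity]
  have htotal : ∑ x, (w₀ x + w₁ x) = 2 := by
    rw [sum_add_distrib, sum_prod_toReal_eq_one, sum_prod_toReal_eq_one]
    norm_num
  rw [measure_pi_toMeasure_toReal, measure_pi_toMeasure_toReal, ← hsqrt, mul_comm]
  calc (∑ x, √(w₀ x * w₁ x)) ^ 2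
      ≤ (∑ x, min (w₀ x) (w₁ x)) * 2 := htotal ▸ sq_sum_sqrt_mul_le_sum_min_mul_sum_add _ hw₀ hw₁
    _ ≤ _ := by
      gcongr
      simpa using sum_min_le_sum_filter_add_sum_filter_not univ w₀ w₁ (φ · = true)

variable {p q : ℝ} (hp : p.toNNReal ≤ 1) (hq : q.toNNReal ≤ 1)

lemma toReal_bernoulli_apply (hp₀ : 0 ≤ p) (b : Bool) :
    (bernoulli p.toNNReal hp b).toReal = cond b p (1 - p) := by
  have hp₁ : p ≤ 1 := Real.toNNReal_le_one.mp hp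
  cases b <;> simp [bernoulli_apply, hp₀, hp₁]

lemma bhattacharyyaCoeff_bernoulli (hp₀ : 0 ≤ p) (hq₀ : 0 ≤ q) :
    bhattacharyyaCoeff (bernoulli p.toNNReal hp) (bernoulli q.toNNReal hq)
      = √(p * q) + √((1 - p) * (1 - q)) := by
  simp [bhattacharyyaCoeff, toReal_bernoulli_apply, hp₀, hq₀]

end PMF

lemma one_sub_sq_div_le_sqrt_mul_add_sqrt_mul {p β : ℝ} (hp₀ : 0 < p) (hp₁ : p < 1) (hβ₀ : 0 ≤ β)
    (hβ₁ : β ≤ (1 - p) / 2) :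
    1 - β ^ 2 / (p * (1 - p)) ≤ √(p * (p + β)) + √((1 - p) * (1 - (p + β))) := by
  have h₀ := Real.add_div_two_sub_le_sqrt_mul hp₀.le (by linarith : 0 ≤ p + β)
  have h₁ := Real.add_div_two_sub_le_sqrt_mul (by linarith : 0 ≤ 1 - p)
    (by linarith : 0 ≤ 1 - (p + β))
  have e₀ : (p - (p + β)) ^ 2 / (2 * (p + (p + β))) ≤ β ^ 2 / (4 * p) := by
    rw [div_le_div_iff₀ (by positivity) (by positivity)]; nlinarith
  have e₁ : (1 - p - (1 - (p + β))) ^ 2 / (2 * (1 - p + (1 - (p + β))))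
      ≤ β ^ 2 / (3 * (1 - p)) := by
    rw [div_le_div_iff₀ (by nlinarith) (by nlinarith)]; nlinarith
  have e : β ^ 2 / (4 * p) + β ^ 2 / (3 * (1 - p)) ≤ β ^ 2 / (p * (1 - p)) := by
    rw [div_add_div _ _ (by positivity) (by nlinarith),
      div_le_div_iff₀ (by nlinarith) (by nlinarith)]
    nlinarith [mul_nonneg (mul_nonneg (sq_nonneg β) (mul_pos hp₀ (sub_pos.mpr hp₁)).le)
      (by linarith : (0 : ℝ) ≤ 9 - p)]
  linarith

theorem stmt_7_general (p β δ : ℝ) (m : ℕ)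
    (hp0 : 0 < p) (hp1 : p < 1) (hβ0 : 0 < β)
    (hβ : β ≤ (1 / 2) * min p (1 - p)) (hpβ : p + β < 1)
    (φ : (Fin m → Bool) → Bool)
    (hI : ((Measure.pi fun _ : Fin m =>
        (PMF.bernoulli (Real.toNNReal p) (Real.toNNReal_le_one.mpr hp1.le)).toMeasure)
        {x | φ x = true}).toReal ≤ δ)
    (hII : ((Measure.pi fun _ : Fin m =>
        (PMF.bernoulli (Real.toNNReal (p + β))
          (Real.toNNReal_le_one.mpr hpβ.le)).toMeasure)
        {x | φ x = false}).toReal ≤ δ) :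
    (p * (1 - p) / (4 * β ^ 2)) * Real.log (1 / (4 * δ)) ≤ m := by
  have hβp : β ≤ p / 2 := by linarith [min_le_left p (1 - p)]
  have hβ₁ : β ≤ (1 - p) / 2 := by linarith [min_le_right p (1 - p)]
  have h1p : 0 < 1 - p := by linarith
  set κ := β ^ 2 / (p * (1 - p))
  have hκ : κ ≤ 1 / 4 := by
    rw [div_le_iff₀ (by positivity)]; nlinarith
  set P₀ := PMF.bernoulli p.toNNReal (Real.toNNReal_le_one.mpr hp1.le)
  set P₁ := PMF.bernoulli (p + β).toNNReal (Real.toNNReal_le_one.mpr hpβ.le)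
  set ρ := P₀.bhattacharyyaCoeff P₁
  have hρ : 1 - κ ≤ ρ := by
    have hρeq : ρ = √(p * (p + β)) + √((1 - p) * (1 - (p + β))) :=
      PMF.bhattacharyyaCoeff_bernoulli _ _ hp0.le (by linarith)
    rw [hρeq]
    exact one_sub_sq_div_le_sqrt_mul_add_sqrt_mul hp0 hp1 hβ0.le hβ₁
  have hlogρ : Real.log ρ⁻¹ ≤ 2 * κ :=
    Real.log_inv_le_two_mul (by positivity) (by linarith) hρ
  have hρm : (ρ ^ m) ^ 2 ≤ 4 * δ := by
    linarith [P₀.bhattacharyyaCoeff_pow_sq_le_two_mul_errors P₁ φ]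
  have hlog : Real.log (1 / (4 * δ)) ≤ 2 * m * Real.log ρ⁻¹ := by
    have := Real.log_le_log (pow_pos (pow_pos (by linarith) m) 2) hρm
    rw [← pow_mul, Real.log_pow] at this
    rw [one_div, Real.log_inv, Real.log_inv]
    push_cast at this
    linarith
  have hm : Real.log (1 / (4 * δ)) ≤ 4 * m * κ := by
    linarith [mul_le_mul_of_nonneg_left hlogρ (m.cast_nonneg : (0 : ℝ) ≤ m)]
  calc p * (1 - p) / (4 * β ^ 2) * Real.log (1 / (4 * δ))
      ≤ p * (1 - p) / (4 * β ^ 2) * (4 * m * κ) := by gcongr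
    _ = (m : ℝ) := by simp only [κ]; field_simp [h1p.ne']

/-- sample-complexity lower bound for testing Bern(p) vs Bern(p+β).
If a test φ on m i.i.d. samples has type-I and type-II error at most δ < 1/8,
then m ≥ (p(1−p)/(4β²))·log(1/(4δ)). -/
theorem stmt_7 (p β δ : ℝ) (m : ℕ)
    (hp0 : 0 < p) (hp1 : p < 1) (hβ0 : 0 < β)
    (hβ : β ≤ (1 / 2) * min p (1 - p)) (hpβ : p + β < 1)
    (hδ0 : 0 < δ) (hδ1 : δ < 1 / 8)
    (φ : (Fin m → Bool) → Bool)
    (hI : ((Measure.pi fun _ : Fin m =>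
        (PMF.bernoulli (Real.toNNReal p) (Real.toNNReal_le_one.mpr hp1.le)).toMeasure)
        {x | φ x = true}).toReal ≤ δ)
    (hII : ((Measure.pi fun _ : Fin m =>
        (PMF.bernoulli (Real.toNNReal (p + β))
          (Real.toNNReal_le_one.mpr hpβ.le)).toMeasure)
        {x | φ x = false}).toReal ≤ δ) :
    (p * (1 - p) / (4 * β ^ 2)) * Real.log (1 / (4 * δ)) ≤ m :=
  stmt_7_general p β δ m hp0 hp1 hβ0 hβ hpβ φ hI hII
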